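/- The projected distributional Bellman operator Π^λ T^π maps F_{Q,m}^X into itself and is a γ-contraction with respect to w̄_∞ on F_{Q,m}^X; consequently it has a unique fixed point η̂^π_λ in F_{Q,m}^X, and for any initial η_0 ∈ F_{Q,m}^X, the sequence defined by η_{k+1} = Π^λ T^π η_k satisfies w̄_∞(η_k, η̂^π_λ) ≤ γ^k · w̄_∞(η_0, η̂^π_λ), which tends to 0 as k → ∞. -/

import Mathlib

open MeasureTheory ProbabilityTheory Set
open scoped ENNReal

/-- Generalized inverse CDF (least τ-quantile). -/
noncomputable def invCDF (ν : Measure ℝ) (τ : ℝ) : ℝ := sInf {y | τ ≤ cdf ν y}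

/-- Upper inverse CDF (greatest τ-quantile). -/
noncomputable def upInvCDF (ν : Measure ℝ) (τ : ℝ) : ℝ := sInf {y | τ < cdf ν y}

/-- Quantile level τ_i = (2i-1)/(2m), with `i : Fin m` zero-indexed. -/
noncomputable def qlevel (m : ℕ) (i : Fin m) : ℝ := (2 * (i : ℝ) + 1) / (2 * m)

/-- The uniform m-atom distribution with the given particle locations. -/
noncomputable def paramDistOne {m : ℕ} (θ : Fin m → ℝ) : Measure ℝ :=
  (m : ℝ≥0∞)⁻¹ • ∑ i : Fin m, Measure.dirac (θ i)

/-- Return-distribution function associated with quantile parameters θ. -/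
noncomputable def paramDist {X : Type*} {m : ℕ} (θ : X → Fin m → ℝ) : X → Measure ℝ :=
  fun x => paramDistOne (θ x)

/-- The distributional Bellman operator T^π. -/
noncomputable def bellman {X : Type*} [MeasurableSpace X]
    (P : X → Measure (ℝ × X)) (γ : ℝ) (η : X → Measure ℝ) : X → Measure ℝ :=
  fun x => (P x).bind (fun p => (η p.2).map (fun z => p.1 + γ * z))

/-- The quantile projection Π^λ, parameter-level output. -/
noncomputable def projParam {X : Type*} {m : ℕ} (lam : X → Fin m → ℝ)
    (η : X → Measure ℝ) : X → Fin m → ℝ :=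
  fun x i => (1 - lam x i) * invCDF (η x) (qlevel m i) + lam x i * upInvCDF (η x) (qlevel m i)

/-- The quantile projection Π^λ on return-distribution functions. -/
noncomputable def proj {X : Type*} {m : ℕ} (lam : X → Fin m → ℝ)
    (η : X → Measure ℝ) : X → Measure ℝ :=
  paramDist (projParam lam η)

/-- The projected distributional Bellman operator Π^λ T^π acting on parameters. -/
noncomputable def projBellmanParam {X : Type*} [MeasurableSpace X]
    (P : X → Measure (ℝ × X)) (γ : ℝ) {m : ℕ} (lam : X → Fin m → ℝ)
    (θ : X → Fin m → ℝ) : X → Fin m → ℝ :=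
  projParam lam (bellman P γ (paramDist θ))

/-- The cube [0,1]^{X×[m]} of interpolation parameters. -/
def unitCube (X : Type*) (m : ℕ) : Set (X → Fin m → ℝ) :=
  {lam | ∀ x i, lam x i ∈ Set.Icc (0:ℝ) 1}

/-- Wasserstein-∞ distance (valued in [0,∞]). -/
noncomputable def winf (ν ν' : Measure ℝ) : ℝ≥0∞ :=
  ⨆ t : Set.Ioo (0:ℝ) 1, ENNReal.ofReal |invCDF ν t - invCDF ν' t|

/-- Extension of w∞ to return-distribution functions: max over states. -/
noncomputable def wbar {X : Type*} (η η' : X → Measure ℝ) : ℝ≥0∞ :=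
  ⨆ x : X, winf (η x) (η' x)

/-- Wasserstein-1 distance between probability distributions on ℝ. -/
noncomputable def w1 (ν ν' : Measure ℝ) : ℝ :=
  ∫ t in Set.Ioo (0:ℝ) 1, |invCDF ν t - invCDF ν' t|

/-- Uniform m-atom distributions. -/
noncomputable def FQ (m : ℕ) : Set (Measure ℝ) :=
  {ν | ∃ z : Fin m → ℝ, ν = paramDistOne z}

/-!
Say `ShiftLE ε ν ν'` when `F_ν'(y) ≤ F_ν(y + ε)` for all `y`. For probability measures this is
`F⁻¹_ν ≤ F⁻¹_ν' + ε`, and then also `F̄⁻¹_ν ≤ F̄⁻¹_ν' + ε`; so `w∞(ν, ν') ≤ ε` iff the relation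
holds in both directions. It survives mixtures, and `z ↦ r + γ z` turns an `ε`-shift into a
`γε`-shift, so `T^π` maps `ε`-close inputs to `γε`-close outputs; `Π^λ` takes convex combinations
of lower and upper quantiles of these, so the projected parameters differ by at most `γε`. This
gives the contraction in `w̄∞`, and also a contraction of `projBellmanParam` for the sup metric on
`X → Fin m → ℝ`, a complete space where Banach's theorem yields the fixed point.
-/

open Filter

lemma csInf_le_csInf_add {A B : Set ℝ} {ε : ℝ} (hA : BddBelow A) (hB : B.Nonempty)
    (h : ∀ y ∈ B, y + ε ∈ A) : sInf A ≤ sInf B + ε := by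
  have : sInf A - ε ≤ sInf B := le_csInf hB fun y hy => by linarith [csInf_le hA (h y hy)]
  linarith

section Quantile

variable {ν ν' : Measure ℝ} {t : ℝ}

lemma nonempty_lt_cdf (ν : Measure ℝ) (ht : t < 1) : {y | t < cdf ν y}.Nonempty :=
  ((tendsto_cdf_atTop ν).eventually (eventually_gt_nhds ht)).exists

lemma bddBelow_le_cdf (ν : Measure ℝ) (ht : 0 < t) : BddBelow {y | t ≤ cdf ν y} := by
  obtain ⟨y₀, hy₀⟩ :=
    eventually_atBot.mp ((tendsto_cdf_atBot ν).eventually (eventually_lt_nhds ht))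
  exact ⟨y₀, fun y hy => le_of_not_ge fun hyy₀ => (hy₀ y hyy₀).not_ge hy⟩

lemma nonempty_le_cdf (ν : Measure ℝ) (ht : t < 1) : {y | t ≤ cdf ν y}.Nonempty :=
  (nonempty_lt_cdf ν ht).mono <| ofPred_subset_ofPred.mpr fun _ => le_of_lt

lemma bddBelow_lt_cdf (ν : Measure ℝ) (ht : 0 < t) : BddBelow {y | t < cdf ν y} :=
  (bddBelow_le_cdf ν ht).mono <| ofPred_subset_ofPred.mpr fun _ => le_of_lt

-- Right-continuity of the CDF makes the infimum defining `invCDF ν t` attained.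
lemma invCDF_le_iff_le_cdf (ht : t ∈ Ioo (0:ℝ) 1) {y : ℝ} :
    invCDF ν t ≤ y ↔ t ≤ cdf ν y := by
  refine ⟨fun h => ?_, fun h => csInf_le (bddBelow_le_cdf ν ht.1) h⟩
  suffices t ≤ cdf ν (invCDF ν t) from this.trans (monotone_cdf ν h)
  refine ge_of_tendsto (((cdf ν).right_continuous _).mono Ioi_subset_Ici_self)
    (eventually_nhdsWithin_of_forall fun z hz => ?_)
  obtain ⟨y, hy, hyz⟩ := (csInf_lt_iff (bddBelow_le_cdf ν ht.1) (nonempty_le_cdf ν ht.2)).mp hz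
  exact hy.trans (monotone_cdf ν hyz.le)

end Quantile

def ShiftLE (ε : ℝ) (ν ν' : Measure ℝ) : Prop := ∀ y : ℝ, ν' (Iic y) ≤ ν (Iic (y + ε))

section ShiftLE

variable {ε : ℝ} {ν ν' : Measure ℝ}

lemma shiftLE_iff_cdf_le [IsProbabilityMeasure ν] [IsProbabilityMeasure ν'] :
    ShiftLE ε ν ν' ↔ ∀ y, cdf ν' y ≤ cdf ν (y + ε) := by
  simp only [ShiftLE, ← ofReal_cdf, ENNReal.ofReal_le_ofReal_iff (cdf_nonneg _ _)]

lemma ShiftLE.invCDF_le [IsProbabilityMeasure ν] [IsProbabilityMeasure ν'] (h : ShiftLE ε ν ν')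
    {t : ℝ} (ht : t ∈ Ioo (0:ℝ) 1) : invCDF ν t ≤ invCDF ν' t + ε :=
  csInf_le_csInf_add (bddBelow_le_cdf ν ht.1) (nonempty_le_cdf ν' ht.2)
    fun _ hy => le_trans hy (shiftLE_iff_cdf_le.mp h _)

lemma ShiftLE.upInvCDF_le [IsProbabilityMeasure ν] [IsProbabilityMeasure ν'] (h : ShiftLE ε ν ν')
    {t : ℝ} (ht : t ∈ Ioo (0:ℝ) 1) : upInvCDF ν t ≤ upInvCDF ν' t + ε :=
  csInf_le_csInf_add (bddBelow_lt_cdf ν ht.1) (nonempty_lt_cdf ν' ht.2)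
    fun _ hy => lt_of_lt_of_le hy (shiftLE_iff_cdf_le.mp h _)

lemma shiftLE_iff_invCDF_le [IsProbabilityMeasure ν] [IsProbabilityMeasure ν'] :
    ShiftLE ε ν ν' ↔ ∀ t ∈ Ioo (0:ℝ) 1, invCDF ν t ≤ invCDF ν' t + ε := by
  refine ⟨fun h _ ht => h.invCDF_le ht, fun h => shiftLE_iff_cdf_le.mpr fun y => ?_⟩
  by_contra! hlt
  obtain ⟨t, htν, htν'⟩ := exists_between hlt
  have ht : t ∈ Ioo (0:ℝ) 1 := ⟨(cdf_nonneg ν _).trans_lt htν, htν'.trans_le (cdf_le_one ν' y)⟩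
  have hy : invCDF ν' t + ε ≤ y + ε := by
    linarith [(invCDF_le_iff_le_cdf ht).mpr htν'.le]
  exact htν.not_ge ((invCDF_le_iff_le_cdf ht).mp ((h t ht).trans hy))

lemma ShiftLE.measure_univ_le (h : ShiftLE ε ν ν') : ν' univ ≤ ν univ :=
  le_of_tendsto_of_tendsto' (tendsto_measure_Iic_atTop ν')
    ((tendsto_measure_Iic_atTop ν).comp (tendsto_atTop_add_const_right _ ε tendsto_id)) h

lemma ShiftLE.map_affine (h : ShiftLE ε ν ν') (c : ℝ) {γ : ℝ} (hγ : 0 ≤ γ) :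
    ShiftLE (γ * ε) (ν.map fun z => c + γ * z) (ν'.map fun z => c + γ * z) := by
  have hmeas : Measurable fun z : ℝ => c + γ * z := by fun_prop
  intro y
  rw [Measure.map_apply hmeas measurableSet_Iic, Measure.map_apply hmeas measurableSet_Iic]
  rcases hγ.eq_or_lt with rfl | hγ
  · by_cases hc : c ≤ y
    · simpa [hc] using h.measure_univ_le
    · simp [hc]
  · have hpre : ∀ u, (fun z : ℝ => c + γ * z) ⁻¹' Iic u = Iic ((u - c) / γ) := fun u => by
      ext z
      simp only [mem_preimage, mem_Iic, le_div_iff₀ hγ]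
      constructor <;> intro <;> linarith
    have hshift : (y + γ * ε - c) / γ = (y - c) / γ + ε := by field_simp; ring
    simpa only [hpre, hshift] using h ((y - c) / γ)

lemma ShiftLE.bind {α : Type*} [MeasurableSpace α] {μ : Measure α} {κ κ' : α → Measure ℝ}
    (hκ : AEMeasurable κ μ) (hκ' : AEMeasurable κ' μ) (h : ∀ a, ShiftLE ε (κ a) (κ' a)) :
    ShiftLE ε (μ.bind κ) (μ.bind κ') := fun y => by
  rw [Measure.bind_apply measurableSet_Iic hκ', Measure.bind_apply measurableSet_Iic hκ]
  exact lintegral_mono fun a => h a y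

end ShiftLE

lemma winf_le_ofReal_iff {ν ν' : Measure ℝ} [IsProbabilityMeasure ν] [IsProbabilityMeasure ν']
    {ε : ℝ} (hε : 0 ≤ ε) : winf ν ν' ≤ ENNReal.ofReal ε ↔ ShiftLE ε ν ν' ∧ ShiftLE ε ν' ν := by
  simp only [winf, iSup_le_iff, Subtype.forall, ENNReal.ofReal_le_ofReal_iff hε, abs_sub_le_iff,
    shiftLE_iff_invCDF_le, sub_le_iff_le_add']
  exact ⟨fun h => ⟨fun t ht => (h t ht).1, fun t ht => (h t ht).2⟩,
    fun h t ht => ⟨h.1 t ht, h.2 t ht⟩⟩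

lemma eq_of_winf_eq_zero {ν ν' : Measure ℝ} [IsProbabilityMeasure ν] [IsProbabilityMeasure ν']
    (h : winf ν ν' = 0) : ν = ν' := by
  obtain ⟨h₁, h₂⟩ := (winf_le_ofReal_iff le_rfl).mp (h.trans ENNReal.ofReal_zero.symm).le
  exact Measure.ext_of_Iic ν ν' fun y => le_antisymm (by simpa using h₂ y) (by simpa using h₁ y)

lemma winf_le_wbar {X : Type*} (η η' : X → Measure ℝ) (x : X) : winf (η x) (η' x) ≤ wbar η η' :=
  le_iSup (fun y => winf (η y) (η' y)) x

section ParamDist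

variable {X : Type*} {m : ℕ}

lemma isProbabilityMeasure_paramDistOne (hm : 0 < m) (θ : Fin m → ℝ) :
    IsProbabilityMeasure (paramDistOne θ) := by
  constructor
  simp [paramDistOne, ENNReal.inv_mul_cancel (Nat.cast_ne_zero.mpr hm.ne')]

lemma shiftLE_paramDistOne {θ θ' : Fin m → ℝ} {ε : ℝ} (h : ∀ i, θ i ≤ θ' i + ε) :
    ShiftLE ε (paramDistOne θ) (paramDistOne θ') := fun y => by
  simp only [paramDistOne, Measure.smul_apply, Measure.coe_finsetSum, Finset.sum_apply,
    Measure.dirac_apply' _ measurableSet_Iic, smul_eq_mul]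
  gcongr with i
  by_cases hi : θ' i ≤ y
  · have : θ i ≤ y + ε := by linarith [h i]
    simp [hi, this]
  · simp [hi]

lemma shiftLE_paramDistOne_of_dist_le {θ θ' : Fin m → ℝ} {ε : ℝ} (h : dist θ θ' ≤ ε) :
    ShiftLE ε (paramDistOne θ) (paramDistOne θ') :=
  shiftLE_paramDistOne fun i => by
    have := (dist_le_pi_dist θ θ' i).trans h
    rw [Real.dist_eq, abs_le] at this
    linarith [this.2]

lemma winf_paramDistOne_le_dist (hm : 0 < m) (θ θ' : Fin m → ℝ) :
    winf (paramDistOne θ) (paramDistOne θ') ≤ ENNReal.ofReal (dist θ θ') := by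
  have := isProbabilityMeasure_paramDistOne hm θ
  have := isProbabilityMeasure_paramDistOne hm θ'
  exact (winf_le_ofReal_iff dist_nonneg).mpr
    ⟨shiftLE_paramDistOne_of_dist_le le_rfl, shiftLE_paramDistOne_of_dist_le (dist_comm _ _).le⟩

lemma exists_paramDist_eq {η : X → Measure ℝ} (hη : ∀ x, η x ∈ FQ m) :
    ∃ θ : X → Fin m → ℝ, η = paramDist θ := by
  choose θ hθ using hη
  exact ⟨θ, funext hθ⟩

lemma eq_of_wbar_eq_zero (hm : 0 < m) {η η' : X → Measure ℝ} (hη : ∀ x, η x ∈ FQ m)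
    (hη' : ∀ x, η' x ∈ FQ m) (h : wbar η η' = 0) : η = η' := by
  obtain ⟨θ, rfl⟩ := exists_paramDist_eq hη
  obtain ⟨θ', rfl⟩ := exists_paramDist_eq hη'
  funext x
  have := isProbabilityMeasure_paramDistOne hm (θ x)
  have := isProbabilityMeasure_paramDistOne hm (θ' x)
  exact eq_of_winf_eq_zero (ν := paramDistOne (θ x)) (ν' := paramDistOne (θ' x))
    (le_antisymm ((winf_le_wbar (paramDist θ) (paramDist θ') x).trans h.le) zero_le)

variable [Fintype X]

lemma wbar_paramDist_le_dist (hm : 0 < m) (θ θ' : X → Fin m → ℝ) :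
    wbar (paramDist θ) (paramDist θ') ≤ ENNReal.ofReal (dist θ θ') :=
  iSup_le fun x => (winf_paramDistOne_le_dist hm _ _).trans
    (ENNReal.ofReal_le_ofReal (dist_le_pi_dist θ θ' x))

lemma wbar_ne_top (hm : 0 < m) {η η' : X → Measure ℝ} (hη : ∀ x, η x ∈ FQ m)
    (hη' : ∀ x, η' x ∈ FQ m) : wbar η η' ≠ ⊤ := by
  obtain ⟨θ, rfl⟩ := exists_paramDist_eq hη
  obtain ⟨θ', rfl⟩ := exists_paramDist_eq hη'
  exact ne_top_of_le_ne_top ENNReal.ofReal_ne_top (wbar_paramDist_le_dist hm θ θ')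

end ParamDist

section Bellman

variable {X : Type*} [MeasurableSpace X] {η η' : X → Measure ℝ}

lemma measurable_map_affine [Countable X] [MeasurableSingletonClass X] [∀ x, SFinite (η x)]
    (γ : ℝ) : Measurable fun p : ℝ × X => (η p.2).map fun z => p.1 + γ * z := by
  refine measurable_from_prod_countable_left fun x => ?_
  refine Measure.measurable_of_measurable_coe _ fun s hs => ?_
  have hpre : MeasurableSet {q : ℝ × ℝ | q.1 + γ * q.2 ∈ s} :=
    (measurable_fst.add (measurable_snd.const_mul γ)) hs
  have hmap (c : ℝ) :
      ((η x).map fun z => c + γ * z) s = η x (Prod.mk c ⁻¹' {q | q.1 + γ * q.2 ∈ s}) :=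
    Measure.map_apply (by fun_prop) hs
  simpa only [hmap] using measurable_measure_prodMk_left hpre

variable [Countable X] [MeasurableSingletonClass X] (P : X → Measure (ℝ × X))

lemma isProbabilityMeasure_bellman [∀ x, IsProbabilityMeasure (P x)]
    [∀ x, IsProbabilityMeasure (η x)] (γ : ℝ) (x : X) :
    IsProbabilityMeasure (bellman P γ η x) :=
  isProbabilityMeasure_bind (measurable_map_affine γ).aemeasurable
    (ae_of_all _ fun _ => Measure.isProbabilityMeasure_map (by fun_prop))

lemma shiftLE_bellman [∀ x, SFinite (η x)] [∀ x, SFinite (η' x)] {γ : ℝ} (hγ : 0 ≤ γ) {ε : ℝ}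
    (h : ∀ y, ShiftLE ε (η y) (η' y)) (x : X) :
    ShiftLE (γ * ε) (bellman P γ η x) (bellman P γ η' x) :=
  ShiftLE.bind (measurable_map_affine γ).aemeasurable (measurable_map_affine γ).aemeasurable
    fun p => (h p.2).map_affine p.1 hγ

end Bellman

section Projection

variable {X : Type*} {m : ℕ}

lemma qlevel_mem_Ioo (i : Fin m) : qlevel m i ∈ Ioo (0:ℝ) 1 := by
  have hi : (i : ℝ) + 1 ≤ m := by exact_mod_cast i.isLt
  have hi0 : (0:ℝ) ≤ i := Nat.cast_nonneg _
  rw [qlevel]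
  exact ⟨div_pos (by linarith) (by linarith), (div_lt_one (by linarith)).mpr (by linarith)⟩

lemma abs_projParam_sub_le {lam : X → Fin m → ℝ} (hlam : lam ∈ unitCube X m)
    {η η' : X → Measure ℝ} {x : X} [IsProbabilityMeasure (η x)] [IsProbabilityMeasure (η' x)]
    {ε : ℝ} (h : ShiftLE ε (η x) (η' x)) (h' : ShiftLE ε (η' x) (η x)) (i : Fin m) :
    |projParam lam η x i - projParam lam η' x i| ≤ ε := by
  obtain ⟨hl0, hl1⟩ := hlam x i
  have ht := qlevel_mem_Ioo i
  have hq := h.invCDF_le ht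
  have hq' := h'.invCDF_le ht
  have hu := h.upInvCDF_le ht
  have hu' := h'.upInvCDF_le ht
  simp only [projParam, abs_le]
  constructor <;> nlinarith

end Projection

section Contraction

variable {α : Type*} {S : Set α} {F : α → α} {d : α → α → ℝ≥0∞} {K : ℝ≥0∞}

lemma iterate_le_pow_mul (hS : MapsTo F S S) (hF : ∀ a ∈ S, ∀ b ∈ S, d (F a) (F b) ≤ K * d a b)
    {a b : α} (ha : a ∈ S) (hb : b ∈ S) (k : ℕ) : d (F^[k] a) (F^[k] b) ≤ K ^ k * d a b := by
  induction k with
  | zero => simp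
  | succ k ih =>
    rw [Function.iterate_succ_apply', Function.iterate_succ_apply', pow_succ', mul_assoc]
    exact (hF _ (hS.iterate k ha) _ (hS.iterate k hb)).trans (mul_le_mul_right ih K)

lemma ENNReal.eq_zero_of_le_mul_self {a : ℝ≥0∞} (hK : K < 1) (ha : a ≠ ⊤) (h : a ≤ K * a) :
    a = 0 := by
  by_contra h0
  rw [mul_comm] at h
  exact (h.trans_lt (by simpa using ENNReal.mul_lt_mul_right h0 ha hK)).false

end Contraction

section ProjectedBellman

variable {X : Type*} [Fintype X] [MeasurableSpace X] [MeasurableSingletonClass X]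
  (P : X → Measure (ℝ × X)) [∀ x, IsProbabilityMeasure (P x)] {γ : ℝ} {m : ℕ}
  {lam : X → Fin m → ℝ}

lemma dist_projBellmanParam_le (hγ : 0 ≤ γ) (hm : 0 < m) (hlam : lam ∈ unitCube X m)
    {θ θ' : X → Fin m → ℝ} {ε : ℝ} (hε : 0 ≤ ε)
    (h : ∀ x, ShiftLE ε (paramDist θ x) (paramDist θ' x))
    (h' : ∀ x, ShiftLE ε (paramDist θ' x) (paramDist θ x)) :
    dist (projBellmanParam P γ lam θ) (projBellmanParam P γ lam θ') ≤ γ * ε := by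
  have (θ : X → Fin m → ℝ) (x : X) : IsProbabilityMeasure (paramDist θ x) :=
    isProbabilityMeasure_paramDistOne hm (θ x)
  have (θ : X → Fin m → ℝ) (x : X) : IsProbabilityMeasure (bellman P γ (paramDist θ) x) :=
    isProbabilityMeasure_bellman P γ x
  refine (dist_pi_le_iff (mul_nonneg hγ hε)).mpr fun x =>
    (dist_pi_le_iff (mul_nonneg hγ hε)).mpr fun i => ?_
  rw [Real.dist_eq]
  exact abs_projParam_sub_le hlam (shiftLE_bellman P hγ h x) (shiftLE_bellman P hγ h' x) i

lemma contractingWith_projBellmanParam (hγ : 0 ≤ γ) (hm : 0 < m) (hlam : lam ∈ unitCube X m)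
    (hγ1 : γ < 1) :
    ContractingWith (Real.toNNReal γ) (projBellmanParam P γ lam) := by
  refine ⟨Real.toNNReal_lt_one.mpr hγ1, LipschitzWith.of_dist_le_mul fun θ θ' => ?_⟩
  rw [Real.coe_toNNReal _ hγ]
  exact dist_projBellmanParam_le P hγ hm hlam dist_nonneg
    (fun x => shiftLE_paramDistOne_of_dist_le (dist_le_pi_dist θ θ' x))
    (fun x => shiftLE_paramDistOne_of_dist_le ((dist_le_pi_dist θ' θ x).trans_eq (dist_comm _ _)))

lemma wbar_proj_bellman_le (hγ : 0 ≤ γ) (hm : 0 < m) (hlam : lam ∈ unitCube X m)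
    {η η' : X → Measure ℝ} (hη : ∀ x, η x ∈ FQ m) (hη' : ∀ x, η' x ∈ FQ m) :
    wbar (proj lam (bellman P γ η)) (proj lam (bellman P γ η')) ≤ ENNReal.ofReal γ * wbar η η' := by
  obtain ⟨θ, rfl⟩ := exists_paramDist_eq hη
  obtain ⟨θ', rfl⟩ := exists_paramDist_eq hη'
  set ε := (wbar (paramDist θ) (paramDist θ')).toReal
  have hε : wbar (paramDist θ) (paramDist θ') = ENNReal.ofReal ε :=
    (ENNReal.ofReal_toReal (wbar_ne_top hm hη hη')).symm
  have (θ : X → Fin m → ℝ) (x : X) : IsProbabilityMeasure (paramDist θ x) :=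
    isProbabilityMeasure_paramDistOne hm (θ x)
  have hshift (x : X) := (winf_le_ofReal_iff (ν := paramDist θ x)
    (ν' := paramDist θ' x) ENNReal.toReal_nonneg).mp
    ((winf_le_wbar _ _ x).trans hε.le)
  calc wbar (proj lam (bellman P γ (paramDist θ))) (proj lam (bellman P γ (paramDist θ')))
      = wbar (paramDist (projBellmanParam P γ lam θ)) (paramDist (projBellmanParam P γ lam θ')) :=
        rfl
    _ ≤ ENNReal.ofReal (dist (projBellmanParam P γ lam θ) (projBellmanParam P γ lam θ')) :=
        wbar_paramDist_le_dist hm _ _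
    _ ≤ ENNReal.ofReal (γ * ε) := ENNReal.ofReal_le_ofReal <|
        dist_projBellmanParam_le P hγ hm hlam ENNReal.toReal_nonneg (fun x => (hshift x).1)
          (fun x => (hshift x).2)
    _ = ENNReal.ofReal γ * wbar (paramDist θ) (paramDist θ') := by rw [ENNReal.ofReal_mul hγ, hε]

lemma eq_of_proj_bellman_eq_self (hγ : 0 ≤ γ) (hm : 0 < m) (hlam : lam ∈ unitCube X m)
    (hγ1 : γ < 1) {η η' : X → Measure ℝ} (hη : ∀ x, η x ∈ FQ m) (hη' : ∀ x, η' x ∈ FQ m)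
    (hfix : proj lam (bellman P γ η) = η) (hfix' : proj lam (bellman P γ η') = η') :
    η = η' := by
  refine eq_of_wbar_eq_zero hm hη hη' <| ENNReal.eq_zero_of_le_mul_self
    (ENNReal.ofReal_lt_one.mpr hγ1) (wbar_ne_top hm hη hη') ?_
  calc wbar η η' = wbar (proj lam (bellman P γ η)) (proj lam (bellman P γ η')) := by
        rw [hfix, hfix']
    _ ≤ ENNReal.ofReal γ * wbar η η' := wbar_proj_bellman_le P hγ hm hlam hη hη'

end ProjectedBellman

theorem projected_bellman_contraction_and_convergence_general
    {X : Type*} [Fintype X] [MeasurableSpace X] [MeasurableSingletonClass X]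
    (P : X → Measure (ℝ × X)) (hP : ∀ x, IsProbabilityMeasure (P x))
    (γ : ℝ) (hγ0 : 0 ≤ γ) (hγ1 : γ < 1)
    {m : ℕ} (hm : 0 < m) (lam : X → Fin m → ℝ) (hlam : lam ∈ unitCube X m) :
    (∀ η : X → Measure ℝ, (∀ x, η x ∈ FQ m) → ∀ x, proj lam (bellman P γ η) x ∈ FQ m)
    ∧ (∀ η η' : X → Measure ℝ, (∀ x, η x ∈ FQ m) → (∀ x, η' x ∈ FQ m) →
        wbar (proj lam (bellman P γ η)) (proj lam (bellman P γ η'))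
          ≤ ENNReal.ofReal γ * wbar η η')
    ∧ (∃! ηhat : X → Measure ℝ,
        (∀ x, ηhat x ∈ FQ m) ∧ proj lam (bellman P γ ηhat) = ηhat)
    ∧ (∀ ηhat : X → Measure ℝ,
        ((∀ x, ηhat x ∈ FQ m) ∧ proj lam (bellman P γ ηhat) = ηhat) →
        ∀ η0 : X → Measure ℝ, (∀ x, η0 x ∈ FQ m) →
          (∀ k : ℕ,
            wbar ((fun η => proj lam (bellman P γ η))^[k] η0) ηhat
              ≤ (ENNReal.ofReal γ) ^ k * wbar η0 ηhat)
          ∧ Filter.Tendsto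
              (fun k => wbar ((fun η => proj lam (bellman P γ η))^[k] η0) ηhat)
              Filter.atTop (nhds 0)) := by
  have := hP
  set F := fun η : X → Measure ℝ => proj lam (bellman P γ η)
  have hmaps : MapsTo F {η | ∀ x, η x ∈ FQ m} {η | ∀ x, η x ∈ FQ m} := fun _ _ _ => ⟨_, rfl⟩
  have hcontr (η η' : X → Measure ℝ) (hη : ∀ x, η x ∈ FQ m) (hη' : ∀ x, η' x ∈ FQ m) :
      wbar (F η) (F η') ≤ ENNReal.ofReal γ * wbar η η' :=
    wbar_proj_bellman_le P hγ0 hm hlam hη hη'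
  have hC := contractingWith_projBellmanParam P hγ0 hm hlam hγ1
  set θhat := hC.fixedPoint (projBellmanParam P γ lam)
  have hfix : F (paramDist θhat) = paramDist θhat := congrArg paramDist hC.fixedPoint_isFixedPt
  refine ⟨fun η hη => hmaps hη, hcontr, ⟨paramDist θhat, ⟨fun _ => ⟨_, rfl⟩, hfix⟩,
    fun η ⟨hη, hηfix⟩ => eq_of_proj_bellman_eq_self P hγ0 hm hlam hγ1 hη (fun _ => ⟨_, rfl⟩)
      hηfix hfix⟩, ?_⟩
  rintro ηhat ⟨hηhat, hηhatfix⟩ η0 hη0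
  have hbound (k : ℕ) : wbar (F^[k] η0) ηhat ≤ ENNReal.ofReal γ ^ k * wbar η0 ηhat := by
    have h := iterate_le_pow_mul hmaps (fun η hη η' hη' => hcontr η η' hη hη') hη0 hηhat k
    rwa [(show Function.IsFixedPt F ηhat from hηhatfix).iterate k] at h
  refine ⟨hbound, tendsto_nhds_bot_mono' ?_ hbound⟩
  simpa using ENNReal.Tendsto.mul_const
    (ENNReal.tendsto_pow_atTop_nhds_zero_of_lt_one (ENNReal.ofReal_lt_one.mpr hγ1))
    (Or.inr (wbar_ne_top hm hη0 hηhat))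

/-- The projected distributional Bellman operator `Π^λ T^π` maps
`F_{Q,m}^X` into itself, is a `γ`-contraction in `w̄_∞` there, has a unique fixed point
`η̂^π_λ` in `F_{Q,m}^X`, and iterates converge to it at rate `γ^k`. -/
theorem projected_bellman_contraction_and_convergence
    {X : Type*} [Fintype X] [MeasurableSpace X] [MeasurableSingletonClass X]
    (P : X → Measure (ℝ × X)) (hP : ∀ x, IsProbabilityMeasure (P x))
    (hPmean : ∀ x, Integrable (fun p : ℝ × X => p.1) (P x))
    (γ : ℝ) (hγ0 : 0 ≤ γ) (hγ1 : γ < 1)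
    {m : ℕ} (hm : 0 < m) (lam : X → Fin m → ℝ) (hlam : lam ∈ unitCube X m) :
    (∀ η : X → Measure ℝ, (∀ x, η x ∈ FQ m) → ∀ x, proj lam (bellman P γ η) x ∈ FQ m)
    ∧ (∀ η η' : X → Measure ℝ, (∀ x, η x ∈ FQ m) → (∀ x, η' x ∈ FQ m) →
        wbar (proj lam (bellman P γ η)) (proj lam (bellman P γ η'))
          ≤ ENNReal.ofReal γ * wbar η η')
    ∧ (∃! ηhat : X → Measure ℝ,
        (∀ x, ηhat x ∈ FQ m) ∧ proj lam (bellman P γ ηhat) = ηhat)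
    ∧ (∀ ηhat : X → Measure ℝ,
        ((∀ x, ηhat x ∈ FQ m) ∧ proj lam (bellman P γ ηhat) = ηhat) →
        ∀ η0 : X → Measure ℝ, (∀ x, η0 x ∈ FQ m) →
          (∀ k : ℕ,
            wbar ((fun η => proj lam (bellman P γ η))^[k] η0) ηhat
              ≤ (ENNReal.ofReal γ) ^ k * wbar η0 ηhat)
          ∧ Filter.Tendsto
              (fun k => wbar ((fun η => proj lam (bellman P γ η))^[k] η0) ηhat)
              Filter.atTop (nhds 0)) :=
  projected_bellman_contraction_and_convergence_general P hP γ hγ0 hγ1 hm lam hlam
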